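/- arXiv:2405.01142 — 2 statements merged into one kernel-verified Lean document; each statement's English description precedes it below -/
import Mathlib

section
/- For i.i.d. Rademacher random variables τ₁, τ₂, … with partial sums Sₙ, the expected absolute value satisfies the recursion E[|Sₙ|] = E[|Sₙ₋₁|] + 1{n−1 is even} · C(n−1, (n−1)/2) / 2^{n−1} for all n ≥ 1. -/
open Finset

def boolEquiv (m : ℕ) : Finset (Fin m) ≃ (Fin m → Bool) where
  toFun A i := decide (i ∈ A)
  invFun s := univ.filter (fun i => s i)
  left_inv A := by ext i; simp
  right_inv s := by ext i; simp

lemma sum_int (m : ℕ) (A : Finset (Fin m)) :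
    (∑ i, (if i ∈ A then (1 : ℤ) else -1)) = 2 * A.card - m := by
  have h : ∀ i : Fin m, (if i ∈ A then (1:ℤ) else -1) = (if i ∈ A then 2 else 0) - 1 := by
    intro i; split <;> ring
  rw [Finset.sum_congr rfl (fun i _ => h i), Finset.sum_sub_distrib,
    Finset.sum_ite_mem, Finset.univ_inter, Finset.sum_const, Finset.sum_const]
  simp [mul_comm]

lemma count_zero (m : ℕ) :
    (∑ s : Fin m → Bool, (if (∑ i, (if s i then (1:ℤ) else -1)) = 0 then (1:ℝ) else 0))
      = if Even m then (m.choose (m / 2) : ℝ) else 0 := by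
  have step : (∑ s : Fin m → Bool, (if (∑ i, (if s i then (1:ℤ) else -1)) = 0 then (1:ℝ) else 0))
      = ∑ A : Finset (Fin m), (if 2 * A.card = m then (1:ℝ) else 0) := by
    refine (Fintype.sum_equiv (boolEquiv m)
      (fun A => if 2 * A.card = m then (1:ℝ) else 0)
      (fun s => if (∑ i, (if s i then (1:ℤ) else -1)) = 0 then (1:ℝ) else 0) ?_).symm
    intro A
    have : (∑ i, (if (boolEquiv m A) i then (1:ℤ) else -1)) = 2 * A.card - m := by
      rw [show (∑ i, (if (boolEquiv m A) i then (1:ℤ) else -1))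
          = ∑ i, (if i ∈ A then (1:ℤ) else -1) by
        apply Finset.sum_congr rfl; intro i _; simp [boolEquiv]]
      exact sum_int m A
    rw [this]
    congr 1
    simp only [eq_iff_iff, sub_eq_zero]
    constructor <;> intro h <;> omega
  rw [step]
  rcases Nat.even_or_odd m with he | ho
  · obtain ⟨k, hk⟩ := he
    rw [if_pos ⟨k, hk⟩]
    have hcond : ∀ A : Finset (Fin m), (2 * A.card = m) ↔ A.card = k := by
      intro A; omega
    simp only [hcond]
    rw [Finset.sum_boole]
    have : Finset.filter (fun A : Finset (Fin m) => A.card = k) univ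
        = Finset.powersetCard k (univ : Finset (Fin m)) := by
      rw [Finset.powersetCard_eq_filter, Finset.powerset_univ]
    rw [this, Finset.card_powersetCard, Finset.card_univ, Fintype.card_fin]
    congr 2
    omega
  · obtain ⟨k, hk⟩ := ho
    rw [if_neg (by simp [Nat.even_iff, hk, Nat.add_mod])]
    apply Finset.sum_eq_zero
    intro A _
    rw [if_neg (by omega)]

lemma abs_step_int (t : ℤ) : |t + 1| + |t - 1| = 2 * |t| + (if t = 0 then 2 else 0) := by
  rcases lt_trichotomy t 0 with h | h | h
  · rw [abs_of_nonpos (by omega), abs_of_nonpos (by omega), abs_of_neg h, if_neg (by omega)]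
    ring
  · subst h; norm_num
  · rw [abs_of_nonneg (by omega), abs_of_nonneg (by omega), abs_of_pos h, if_neg (by omega)]
    ring

lemma real_sum_eq_int (m : ℕ) (s : Fin m → Bool) :
    (∑ i, (if s i then (1 : ℝ) else -1)) = ((∑ i, (if s i then (1 : ℤ) else -1) : ℤ) : ℝ) := by
  push_cast
  rfl

lemma key (m : ℕ) :
    (∑ s : Fin (m + 1) → Bool, |∑ i, (if s i then (1 : ℝ) else -1)|)
      = 2 * (∑ s : Fin m → Bool, |∑ i, (if s i then (1 : ℝ) else -1)|)
        + 2 * (if Even m then (m.choose (m / 2) : ℝ) else 0) := by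
  have e1 : (∑ s : Fin (m + 1) → Bool, |∑ i, (if s i then (1 : ℝ) else -1)|)
      = ∑ p : Bool × (Fin m → Bool), |∑ i, (if (Fin.cons p.1 p.2 : Fin (m + 1) → Bool) i then (1 : ℝ) else -1)| := by
    exact (Fintype.sum_equiv (Fin.consEquiv (fun _ => Bool))
      (fun p => |∑ i, (if (Fin.cons p.1 p.2 : Fin (m + 1) → Bool) i then (1 : ℝ) else -1)|)
      (fun s => |∑ i, (if s i then (1 : ℝ) else -1)|) (fun p => rfl)).symm
  rw [e1, Fintype.sum_prod_type_right]
  have e2 : ∀ s : Fin m → Bool,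
      (∑ b : Bool, |∑ i, (if (Fin.cons b s : Fin (m + 1) → Bool) i then (1 : ℝ) else -1)|)
        = 2 * |∑ i, (if s i then (1 : ℝ) else -1)|
          + (if (∑ i, (if s i then (1 : ℤ) else -1)) = 0 then 2 else 0) := by
    intro s
    have hc : ∀ b : Bool, (∑ i : Fin (m + 1), (if (Fin.cons b s : Fin (m + 1) → Bool) i then (1 : ℝ) else -1))
        = (if b then (1 : ℝ) else -1) + ∑ i, (if s i then (1 : ℝ) else -1) := by
      intro b
      rw [show (fun i : Fin (m + 1) => (if (Fin.cons b s : Fin (m + 1) → Bool) i then (1 : ℝ) else -1))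
          = Fin.cons (if b then (1 : ℝ) else -1) (fun i => if s i then (1 : ℝ) else -1) by
        ext i
        refine Fin.cases ?_ ?_ i <;> simp]
      exact Fin.sum_cons _ _
    rw [Fintype.sum_bool, hc true, hc false]
    set T := ∑ i, (if s i then (1 : ℝ) else -1) with hT
    set t := ∑ i, (if s i then (1 : ℤ) else -1) with ht
    have hTt : T = (t : ℝ) := real_sum_eq_int m s
    have := abs_step_int t
    have h2 : |(t : ℝ) + 1| + |(t : ℝ) - 1| = 2 * |(t : ℝ)| + (if t = 0 then 2 else 0) := by
      exact_mod_cast congrArg (fun z : ℤ => (z : ℝ)) this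
    rw [hTt]
    rw [if_pos rfl, if_neg (by simp)]
    calc |1 + (t:ℝ)| + |-1 + (t:ℝ)| = |(t:ℝ) + 1| + |(t:ℝ) - 1| := by ring_nf
      _ = 2 * |(t : ℝ)| + (if t = 0 then 2 else 0) := h2
  rw [Finset.sum_congr rfl (fun s _ => e2 s), Finset.sum_add_distrib, ← Finset.mul_sum]
  congr 1
  have : (∑ s : Fin m → Bool, (if (∑ i, (if s i then (1 : ℤ) else -1)) = 0 then (2:ℝ) else 0))
      = 2 * ∑ s : Fin m → Bool, (if (∑ i, (if s i then (1 : ℤ) else -1)) = 0 then (1:ℝ) else 0) := by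
    rw [Finset.mul_sum]
    exact Finset.sum_congr rfl (fun s _ => by split_ifs <;> norm_num)
  rw [this, count_zero]

/-- For i.i.d. Rademacher variables with partial sums Sₙ:
E[|Sₙ|] = E[|Sₙ₋₁|] + 1{n−1 even} · C(n−1, (n−1)/2) / 2^{n−1} for all n ≥ 1. -/
theorem rademacher_abs_sum_expectation_recursion (n : ℕ) (hn : 1 ≤ n) :
    (∑ s : Fin n → Bool, |∑ i, (if s i then (1 : ℝ) else -1)|) / 2 ^ n
      = (∑ s : Fin (n - 1) → Bool, |∑ i, (if s i then (1 : ℝ) else -1)|) / 2 ^ (n - 1)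
        + (if Even (n - 1) then ((n - 1).choose ((n - 1) / 2) : ℝ) / 2 ^ (n - 1) else 0) := by
  obtain ⟨m, rfl⟩ : ∃ m, n = m + 1 := ⟨n - 1, by omega⟩
  simp only [Nat.add_sub_cancel]
  rw [key m, pow_succ]
  have h2 : (2:ℝ)^m ≠ 0 := by positivity
  split_ifs with h
  · field_simp
    rfl
  · field_simp
    simp
end

section
/- For integers M ≥ 2 and K ≥ 1, the function T(d) = 1 + (1−d)^{MK} − (1/M) · [(1 + (1−d)^K)/(1 − (1−d)^K)] · (1 − (1−d)^{MK}) is strictly monotonically increasing on the interval 0 < d < 1. -/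
open Set

lemma key_ineq (n : ℕ) (hn : 1 ≤ n) : ∀ s : ℝ, 0 < s → s < 1 →
    s ^ n * (1 + (n : ℝ) * (1 - s) + ((n : ℝ) + 1) * (n : ℝ) * (1 - s) ^ 2 / 2) < 1 := by
  induction n, hn using Nat.le_induction with
  | base =>
    intro s hs0 hs1
    push_cast
    nlinarith [pow_pos (sub_pos.mpr hs1) 3]
  | succ n hn ih =>
    intro s hs0 hs1
    push_cast
    have hp : (0:ℝ) < s ^ n := pow_pos hs0 n
    have h1 := ih s hs0 hs1
    have hstep : s * (1 + ((n:ℝ)+1) * (1 - s) + (((n:ℝ)+1) + 1) * ((n:ℝ)+1) * (1 - s)^2 / 2)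
        ≤ 1 + (n:ℝ) * (1 - s) + ((n:ℝ) + 1) * (n:ℝ) * (1 - s)^2 / 2 := by
      have ht3 : (0:ℝ) < (1-s)^3 := pow_pos (sub_pos.mpr hs1) 3
      have hn0 : (0:ℝ) ≤ (n:ℝ) := Nat.cast_nonneg n
      nlinarith [ht3, mul_nonneg hn0 ht3.le, mul_nonneg (mul_nonneg hn0 hn0) ht3.le]
    calc s ^ (n+1) * (1 + ((n:ℝ)+1) * (1 - s) + (((n:ℝ)+1) + 1) * ((n:ℝ)+1) * (1 - s) ^ 2 / 2)
        = s ^ n * (s * (1 + ((n:ℝ)+1) * (1 - s) + (((n:ℝ)+1)+1) * ((n:ℝ)+1) * (1 - s)^2 / 2)) := by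
          ring
      _ ≤ s ^ n * (1 + (n:ℝ) * (1 - s) + ((n:ℝ) + 1) * (n:ℝ) * (1 - s)^2 / 2) :=
          mul_le_mul_of_nonneg_left hstep hp.le
      _ < 1 := h1

lemma g_hasDerivAt (M : ℕ) (hM : 2 ≤ M) (x : ℝ) (hx0 : 0 < x) (hx1 : x < 1) :
    HasDerivAt (fun s : ℝ => 1 + s ^ M - 1 / (M:ℝ) * ((1 + s) / (1 - s)) * (1 - s ^ M))
      ((M:ℝ) * x ^ (M-1) + (1+x)/(1-x) * x^(M-1) - 2/(M:ℝ) * (1 - x^M)/(1-x)^2) x := by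
  have h1x : (1 : ℝ) - x ≠ 0 := by intro h; linarith [h]
  have hM0 : (M:ℝ) ≠ 0 := by positivity
  have hpow : HasDerivAt (fun s : ℝ => s ^ M) ((M:ℝ) * x ^ (M-1)) x := hasDerivAt_pow M x
  have hnum : HasDerivAt (fun s : ℝ => 1 + s) 1 x := by
    simpa using (hasDerivAt_id x).const_add (1:ℝ)
  have hden : HasDerivAt (fun s : ℝ => 1 - s) (-1) x := by
    simpa using (hasDerivAt_id x).const_sub (1:ℝ)
  have hdiv := hnum.div hden h1x
  have hone : HasDerivAt (fun s : ℝ => 1 - s ^ M) (-((M:ℝ) * x ^ (M-1))) x := hpow.const_sub 1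
  have hq := HasDerivAt.const_mul (1/(M:ℝ)) hdiv
  have hprod := hq.mul hone
  have hfinal := (hpow.const_add (1:ℝ)).sub hprod
  refine HasDerivAt.congr_deriv hfinal ?_
  simp only [Pi.div_apply]
  field_simp
  ring

lemma g_strictAntiOn (M : ℕ) (hM : 2 ≤ M) :
    StrictAntiOn (fun s : ℝ => 1 + s ^ M - 1 / (M:ℝ) * ((1 + s) / (1 - s)) * (1 - s ^ M))
      (Ioo (0:ℝ) 1) := by
  apply strictAntiOn_of_deriv_neg (convex_Ioo (0:ℝ) 1)
  · intro x hx
    exact (g_hasDerivAt M hM x hx.1 hx.2).continuousAt.continuousWithinAt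
  · rw [interior_Ioo]
    intro x hx
    obtain ⟨hx0, hx1⟩ := hx
    rw [(g_hasDerivAt M hM x hx0 hx1).deriv]
    have h1x : (0:ℝ) < 1 - x := by linarith
    have hM0 : (0:ℝ) < (M:ℝ) := by positivity
    have key := key_ineq (M-1) (by omega) x hx0 hx1
    have hc : ((M-1 : ℕ) : ℝ) = (M:ℝ) - 1 := by
      have : (1:ℕ) ≤ M := by omega
      push_cast [Nat.cast_sub this]
      ring
    rw [hc] at key
    have hxM : x ^ M = x ^ (M-1) * x := by
      rw [← pow_succ]
      congr 1
      omega
    have hD : ((M:ℝ) * x ^ (M-1) + (1+x)/(1-x) * x^(M-1) - 2/(M:ℝ) * (1 - x^M)/(1-x)^2)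
        * ((M:ℝ) * (1-x)^2 / 2)
        = x ^ (M-1) * (1 + ((M:ℝ) - 1) * (1 - x) + (((M:ℝ)-1) + 1) * ((M:ℝ)-1) * (1 - x) ^ 2 / 2) - 1 := by
      rw [hxM]
      field_simp
      ring
    nlinarith [hD, key, mul_pos hM0 (pow_pos h1x 2)]

/-- For integers M ≥ 2 and K ≥ 1, the function
T(d) = 1 + (1−d)^{MK} − (1/M)·[(1 + (1−d)^K)/(1 − (1−d)^K)]·(1 − (1−d)^{MK})
is strictly monotonically increasing on the interval 0 < d < 1. -/
theorem T_strictMonoOn (M K : ℕ) (hM : 2 ≤ M) (hK : 1 ≤ K) :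
    StrictMonoOn
      (fun d : ℝ =>
        1 + (1 - d) ^ (M * K)
          - (1 / (M : ℝ)) * ((1 + (1 - d) ^ K) / (1 - (1 - d) ^ K))
            * (1 - (1 - d) ^ (M * K)))
      (Set.Ioo (0 : ℝ) 1) := by
  intro x hx y hy hxy
  obtain ⟨hx0, hx1⟩ := hx
  obtain ⟨hy0, hy1⟩ := hy
  have hK0 : K ≠ 0 := by omega
  have hsx : (1-x)^K ∈ Ioo (0:ℝ) 1 :=
    ⟨pow_pos (by linarith) K, pow_lt_one₀ (by linarith) (by linarith) hK0⟩
  have hsy : (1-y)^K ∈ Ioo (0:ℝ) 1 :=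
    ⟨pow_pos (by linarith) K, pow_lt_one₀ (by linarith) (by linarith) hK0⟩
  have hlt : (1-y)^K < (1-x)^K := pow_lt_pow_left₀ (by linarith) (by linarith) hK0
  have hg := g_strictAntiOn M hM hsy hsx hlt
  have e : ∀ d : ℝ, (1-d)^(M*K) = ((1-d)^K)^M := fun d => by rw [mul_comm, pow_mul]
  simp only [e]
  simpa using hg
end
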